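/- For every complex x with x ≠ 0 and x ≠ −1, one has R₁₂(x) R₁₃(x+1) R₂₃(1) = (1 − (P₁₂ + P₁₃) x⁻¹)(1 − P₂₃) as operators on (ℂⁿ)^{⊗3}; in particular, composed on the right with 1 − P₂₃, the product R₁₂(x) R₁₃(x+1) has no pole at x = −1. -/

import Mathlib

noncomputable section
open scoped Kronecker
open Matrix

/-- Square matrices acting on the tensor power `(ℂⁿ)^{⊗ι}`, modelled on the
function basis `ι → Fin n`. -/
abbrev TMat (ι : Type) (n : ℕ) := Matrix (ι → Fin n) (ι → Fin n) ℂ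

/-- The matrix units `E_{ij}` of `End(ℂⁿ)`. -/
def matE (n : ℕ) (i j : Fin n) : Matrix (Fin n) (Fin n) ℂ := Matrix.single i j 1

/-- The flip `P = Σ E_{ij} ⊗ E_{ji}` on `ℂⁿ ⊗ ℂⁿ`. -/
def flipP (n : ℕ) : Matrix (Fin n × Fin n) (Fin n × Fin n) ℂ :=
  ∑ i : Fin n, ∑ j : Fin n, matE n i j ⊗ₖ matE n j i

/-- `P̄ = Σ E_{ij} ⊗ E_{ij}` on `ℂⁿ ⊗ ℂⁿ`. -/
def PbarM (n : ℕ) : Matrix (Fin n × Fin n) (Fin n × Fin n) ℂ :=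
  ∑ i : Fin n, ∑ j : Fin n, matE n i j ⊗ₖ matE n i j

/-- The conjugate `X̃ = G⁻¹ Xᵀ G` of `X` relative to the bilinear form with
Gram matrix `G`, i.e. `⟨X u, v⟩ = ⟨u, X̃ v⟩` where `⟨u, v⟩ = uᵀ G v`. -/
def conjF {n : ℕ} (G X : Matrix (Fin n) (Fin n) ℂ) : Matrix (Fin n) (Fin n) ℂ :=
  G⁻¹ * Xᵀ * G

/-- `P̃ = Σ Ẽ_{ij} ⊗ E_{ji}`. -/
def PtilM (n : ℕ) (G : Matrix (Fin n) (Fin n) ℂ) : Matrix (Fin n × Fin n) (Fin n × Fin n) ℂ :=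
  ∑ i : Fin n, ∑ j : Fin n, conjF G (matE n i j) ⊗ₖ matE n j i

/-- `P̂ = Σ Ẽ_{ij} ⊗ E_{ij}`. -/
def PhatM (n : ℕ) (G : Matrix (Fin n) (Fin n) ℂ) : Matrix (Fin n × Fin n) (Fin n × Fin n) ℂ :=
  ∑ i : Fin n, ∑ j : Fin n, conjF G (matE n i j) ⊗ₖ matE n i j

/-- The Yang R-matrix `R(x) = 1 − P x⁻¹`. -/
def Rm (n : ℕ) (x : ℂ) : Matrix (Fin n × Fin n) (Fin n × Fin n) ℂ := 1 - x⁻¹ • flipP n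

/-- `R̄(x) = 1 − P̄ x⁻¹`. -/
def RbarM (n : ℕ) (x : ℂ) : Matrix (Fin n × Fin n) (Fin n × Fin n) ℂ := 1 - x⁻¹ • PbarM n

/-- `R̃(x) = 1 − P̃ x⁻¹`. -/
def RtilM (n : ℕ) (G : Matrix (Fin n) (Fin n) ℂ) (x : ℂ) :
    Matrix (Fin n × Fin n) (Fin n × Fin n) ℂ := 1 - x⁻¹ • PtilM n G

/-- `R̂(x) = 1 − P̂ x⁻¹`. -/
def RhatM (n : ℕ) (G : Matrix (Fin n) (Fin n) ℂ) (x : ℂ) :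
    Matrix (Fin n × Fin n) (Fin n × Fin n) ℂ := 1 - x⁻¹ • PhatM n G

/-- `Z_{ij}` : the operator on a tensor power of `ℂⁿ` acting as the two-factor
operator `Z` in the `i`-th and `j`-th tensor factors and as the identity elsewhere. -/
def lift2 {n : ℕ} {ι : Type} [Fintype ι] [DecidableEq ι] (i j : ι)
    (Z : Matrix (Fin n × Fin n) (Fin n × Fin n) ℂ) : TMat ι n :=
  fun f g => Z (f i, f j) (g i, g j) *
    ∏ p : ι, if p = i ∨ p = j then 1 else (if f p = g p then 1 else 0)

/-!
`R₁₂(x) R₁₃(x+1)` expands to `1 − (P₁₂ + P₁₃) x⁻¹ + (x⁻¹ − (x+1)⁻¹)(P₁₃ + P₁₂ P₁₃)`, by partial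
fractions `x⁻¹ (x+1)⁻¹ = x⁻¹ − (x+1)⁻¹`. Lifted flips are the permutation matrices of the
transpositions of tensor factors, so `P₁₂ P₁₃ = P₁₃ P₂₃` and `P₂₃² = 1`. Hence the correction term
is `P₁₃ (1 + P₂₃)`, which `1 − P₂₃ = R₂₃(1)` annihilates.
-/

theorem one_sub_smul_mul_one_sub_smul_mul_one_sub {K A : Type*} [Field K] [Ring A] [Algebra K A]
    {a b c : A} (hab : a * b = b * c) (hc : c * c = 1) {x : K} (hx : x ≠ 0) (hx1 : x + 1 ≠ 0) :
    (1 - x⁻¹ • a) * (1 - (x + 1)⁻¹ • b) * (1 - c) = (1 - x⁻¹ • (a + b)) * (1 - c) := by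
  have partial_fractions : x⁻¹ * (x + 1)⁻¹ = x⁻¹ - (x + 1)⁻¹ := by
    field_simp; ring
  have expand : (1 - x⁻¹ • a) * (1 - (x + 1)⁻¹ • b)
      = (1 - x⁻¹ • (a + b)) + (x⁻¹ - (x + 1)⁻¹) • (b + a * b) := by
    simp only [mul_sub, sub_mul, mul_one, one_mul, smul_mul_smul_comm, partial_fractions,
      smul_add, sub_smul]
    abel
  have annihilate : (b + a * b) * (1 - c) = 0 := by
    rw [hab, mul_sub, mul_one, add_mul, mul_assoc, hc, mul_one]
    abel
  rw [expand, add_mul, smul_mul_assoc, annihilate, smul_zero, add_zero]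

theorem eq_iff_forall_ne_and {ι α : Type*} {i j : ι} {f g : ι → α} :
    f = g ↔ (∀ p, p ≠ i → p ≠ j → f p = g p) ∧ f i = g i ∧ f j = g j := by
  refine ⟨by rintro rfl; simp, fun ⟨h, hi, hj⟩ => funext fun p => ?_⟩
  by_cases hpi : p = i
  · rwa [hpi]
  by_cases hpj : p = j
  · rwa [hpj]
  exact h p hpi hpj

theorem flipP_apply {n : ℕ} (a b c d : Fin n) :
    flipP n (a, b) (c, d) = if a = d ∧ b = c then 1 else 0 := by
  simp only [flipP, Matrix.sum_apply, Matrix.kroneckerMap_apply, matE, Matrix.single,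
    Matrix.of_apply]
  rw [Finset.sum_eq_single a, Finset.sum_eq_single c] <;> aesop

def factorPerm (ι : Type*) (n : ℕ) : Equiv.Perm ι →* Equiv.Perm (ι → Fin n) where
  toFun σ := σ.arrowCongr (Equiv.refl _)
  map_one' := rfl
  map_mul' _ _ := rfl

theorem factorPerm_apply {ι : Type*} {n : ℕ} (σ : Equiv.Perm ι) (f : ι → Fin n) :
    factorPerm ι n σ f = f ∘ σ.symm :=
  rfl

section Lift

variable {ι : Type} [Fintype ι] [DecidableEq ι] {n : ℕ}

theorem lift2_apply (i j : ι) (Z : Matrix (Fin n × Fin n) (Fin n × Fin n) ℂ) (f g : ι → Fin n) :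
    lift2 i j Z f g = if ∀ p, p ≠ i → p ≠ j → f p = g p then Z (f i, f j) (g i, g j) else 0 := by
  have hprod : (∏ p : ι, if p = i ∨ p = j then 1 else (if f p = g p then 1 else 0) : ℂ)
      = if ∀ p, p ≠ i → p ≠ j → f p = g p then 1 else 0 := by
    simp only [← ite_or, Fintype.prod_boole]
    exact if_congr (forall_congr' fun p => by tauto) rfl rfl
  rw [lift2, hprod, mul_ite, mul_one, mul_zero]

theorem lift2_sub (i j : ι) (Z W : Matrix (Fin n × Fin n) (Fin n × Fin n) ℂ) :
    lift2 i j (Z - W) = lift2 i j Z - lift2 i j W := by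
  ext f g
  simp only [lift2_apply, Matrix.sub_apply]
  split_ifs <;> simp

theorem lift2_smul (i j : ι) (c : ℂ) (Z : Matrix (Fin n × Fin n) (Fin n × Fin n) ℂ) :
    lift2 i j (c • Z) = c • lift2 i j Z := by
  ext f g
  simp only [lift2_apply, Matrix.smul_apply]
  split_ifs <;> simp

theorem lift2_one (i j : ι) : lift2 i j (1 : Matrix (Fin n × Fin n) _ ℂ) = 1 := by
  ext f g
  simp only [lift2_apply, Matrix.one_apply, Prod.mk.injEq, ← ite_and]
  exact if_congr eq_iff_forall_ne_and.symm rfl rfl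

theorem lift2_Rm (i j : ι) (x : ℂ) :
    lift2 i j (Rm n x) = 1 - x⁻¹ • lift2 i j (flipP n) := by
  rw [Rm, lift2_sub, lift2_smul, lift2_one]

theorem lift2_flipP (i j : ι) :
    lift2 i j (flipP n) = (factorPerm ι n (Equiv.swap i j)).permMatrix ℂ := by
  ext f g
  simp only [lift2_apply, flipP_apply, Equiv.Perm.permMatrix, PEquiv.toMatrix_apply,
    Equiv.toPEquiv_apply, Option.mem_some_iff, ← ite_and]
  refine if_congr ?_ rfl rfl
  rw [factorPerm_apply, Equiv.symm_swap, eq_iff_forall_ne_and (i := i) (j := j)]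
  simp only [Function.comp_apply, Equiv.swap_apply_left, Equiv.swap_apply_right]
  exact and_congr (forall₃_congr fun p hpi hpj => by rw [Equiv.swap_apply_of_ne_of_ne hpi hpj])
    and_comm

theorem lift2_flipP_mul_lift2_flipP {i j k : ι} (hij : i ≠ j) (hjk : j ≠ k) :
    lift2 i j (flipP n) * lift2 i k (flipP n) = lift2 i k (flipP n) * lift2 j k (flipP n) := by
  have braid : Equiv.swap i k * Equiv.swap i j = Equiv.swap j k * Equiv.swap i k := by
    rw [Equiv.swap_comm j k, ← Equiv.swap_mul_swap_mul_swap hij.symm hjk, Equiv.swap_comm j i,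
      mul_assoc (_ * _), Equiv.swap_mul_self, mul_one]
  rw [lift2_flipP, lift2_flipP, lift2_flipP, ← permMatrix_mul, ← permMatrix_mul,
    ← map_mul, ← map_mul, braid]

theorem lift2_flipP_mul_self (i j : ι) :
    lift2 i j (flipP n) * lift2 i j (flipP n) = 1 := by
  rw [lift2_flipP, ← permMatrix_mul, ← map_mul, Equiv.swap_mul_self, map_one, permMatrix_one]

end Lift

theorem stmt6_general (n : ℕ) (x : ℂ) (hx : x ≠ 0) (hx' : x ≠ -1) :
    lift2 (0 : Fin 3) 1 (Rm n x) * lift2 (0 : Fin 3) 2 (Rm n (x + 1)) *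
      lift2 (1 : Fin 3) 2 (Rm n 1)
  = (1 - x⁻¹ • (lift2 (0 : Fin 3) 1 (flipP n) + lift2 (0 : Fin 3) 2 (flipP n))) *
      (1 - lift2 (1 : Fin 3) 2 (flipP n)) := by
  have hx1 : x + 1 ≠ 0 := fun h => hx' (eq_neg_of_add_eq_zero_left h)
  rw [lift2_Rm, lift2_Rm, lift2_Rm, inv_one, one_smul]
  exact one_sub_smul_mul_one_sub_smul_mul_one_sub
    (lift2_flipP_mul_lift2_flipP (by decide) (by decide)) (lift2_flipP_mul_self _ _) hx hx1

/-- `R₁₂(x) R₁₃(x+1) R₂₃(1) = (1 − (P₁₂ + P₁₃) x⁻¹)(1 − P₂₃)` on `(ℂⁿ)^{⊗3}`. -/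
theorem stmt6 (n : ℕ) (hn : 1 ≤ n) (x : ℂ) (hx : x ≠ 0) (hx' : x ≠ -1) :
    lift2 (0 : Fin 3) 1 (Rm n x) * lift2 (0 : Fin 3) 2 (Rm n (x + 1)) *
      lift2 (1 : Fin 3) 2 (Rm n 1)
  = (1 - x⁻¹ • (lift2 (0 : Fin 3) 1 (flipP n) + lift2 (0 : Fin 3) 2 (flipP n))) *
      (1 - lift2 (1 : Fin 3) 2 (flipP n)) :=
  stmt6_general n x hx hx'
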